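/- Gaussian moderate-deviation behavior of non-null P-values in the sparse normal means model: let Z be standard normal, fix q > r > 0, and set μ_n = √(2 r log n). Then lim_{n→∞} (1/log n) log P(Φ̄(μ_n + Z) < n^{-q}) = −(√q − √r)², where Φ̄ is the standard normal survival function. -/

import Mathlib

open MeasureTheory ProbabilityTheory Filter

noncomputable section

/-- The survival function of the standard normal distribution, `Φ̄(x) = P(Z > x)`. -/
def stdNormalSurvival (x : ℝ) : ℝ := (gaussianReal 0 1 (Set.Ioi x)).toReal

/-- The calibration `μ_n = √(2 r log n)`. -/
def muCal (r : ℝ) (n : ℕ) : ℝ := Real.sqrt (2 * r * Real.log n)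

open Real

lemma pdf_eq (u : ℝ) : gaussianPDFReal 0 1 u = (Real.sqrt (2*π))⁻¹ * Real.exp (-u^2/2) := by
  simp [gaussianPDFReal]

lemma surv_eq (x : ℝ) :
    stdNormalSurvival x = ∫ u in Set.Ioi x, gaussianPDFReal 0 1 u := by
  rw [stdNormalSurvival, gaussianReal_apply_eq_integral 0 one_ne_zero,
    ENNReal.toReal_ofReal]
  exact setIntegral_nonneg measurableSet_Ioi fun u _ => gaussianPDFReal_nonneg 0 1 u

lemma surv_antitone : Antitone stdNormalSurvival := by
  intro x y hxy
  exact ENNReal.toReal_le_toReal (measure_ne_top _ _) (measure_ne_top _ _) |>.mpr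
    (measure_mono (Set.Ioi_subset_Ioi hxy))

lemma surv_upper {x : ℝ} (hx : 0 ≤ x) : stdNormalSurvival x ≤ Real.exp (-x^2/2) := by
  rw [surv_eq]
  have hint : Integrable (fun u => Real.exp (-x^2/2) * gaussianPDFReal 0 1 (u - x)) :=
    ((integrable_gaussianPDFReal 0 1).comp_sub_right x).const_mul _
  calc ∫ u in Set.Ioi x, gaussianPDFReal 0 1 u
      ≤ ∫ u in Set.Ioi x, Real.exp (-x^2/2) * gaussianPDFReal 0 1 (u - x) := by
        refine setIntegral_mono_on ((integrable_gaussianPDFReal 0 1).integrableOn)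
          hint.integrableOn measurableSet_Ioi fun u hu => ?_
        have hux : x < u := hu
        rw [pdf_eq, pdf_eq]
        have hle : Real.exp (-u^2/2) ≤ Real.exp (-(u-x)^2/2 + -x^2/2) :=
          Real.exp_le_exp.mpr (by nlinarith)
        calc (Real.sqrt (2*π))⁻¹ * Real.exp (-u^2/2)
            ≤ (Real.sqrt (2*π))⁻¹ * Real.exp (-(u-x)^2/2 + -x^2/2) :=
              mul_le_mul_of_nonneg_left hle (by positivity)
          _ = Real.exp (-x^2/2) * ((Real.sqrt (2*π))⁻¹ * Real.exp (-(u-x)^2/2)) := by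
              rw [Real.exp_add]; ring
    _ = Real.exp (-x^2/2) * ∫ u in Set.Ioi x, gaussianPDFReal 0 1 (u - x) :=
        integral_const_mul _ _
    _ ≤ Real.exp (-x^2/2) * 1 := by
        gcongr
        calc ∫ u in Set.Ioi x, gaussianPDFReal 0 1 (u - x)
            ≤ ∫ u, gaussianPDFReal 0 1 (u - x) :=
              setIntegral_le_integral ((integrable_gaussianPDFReal 0 1).comp_sub_right x)
                (ae_of_all _ fun u => gaussianPDFReal_nonneg 0 1 (u - x))
          _ = ∫ u, gaussianPDFReal 0 1 u := by
              exact integral_sub_right_eq_self (gaussianPDFReal 0 1) x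
          _ = 1 := integral_gaussianPDFReal_eq_one 0 one_ne_zero
    _ = Real.exp (-x^2/2) := mul_one _

lemma surv_lower {x : ℝ} (hx : 0 ≤ x) :
    (Real.sqrt (2*π))⁻¹ * Real.exp (-(x+1)^2/2) ≤ stdNormalSurvival x := by
  rw [surv_eq]
  have hc : ((Real.sqrt (2*π))⁻¹ * Real.exp (-(x+1)^2/2)) =
      ∫ _ in Set.Ioc x (x+1), ((Real.sqrt (2*π))⁻¹ * Real.exp (-(x+1)^2/2)) := by
    rw [setIntegral_const, Real.volume_real_Ioc, smul_eq_mul]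
    norm_num
  rw [hc]
  calc ∫ _ in Set.Ioc x (x+1), ((Real.sqrt (2*π))⁻¹ * Real.exp (-(x+1)^2/2))
      ≤ ∫ u in Set.Ioc x (x+1), gaussianPDFReal 0 1 u := by
        refine setIntegral_mono_on (integrableOn_const ?_)
          ((integrable_gaussianPDFReal 0 1).integrableOn) measurableSet_Ioc fun u hu => ?_
        · rw [Real.volume_Ioc]; norm_num
        · rw [pdf_eq]
          have h1 : x < u := hu.1
          have h2 : u ≤ x + 1 := hu.2
          exact mul_le_mul_of_nonneg_left (Real.exp_le_exp.mpr (by nlinarith)) (by positivity)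
    _ ≤ ∫ u in Set.Ioi x, gaussianPDFReal 0 1 u := by
        refine setIntegral_mono_set ((integrable_gaussianPDFReal 0 1).integrableOn)
          (ae_of_all _ fun u => gaussianPDFReal_nonneg 0 1 u) ?_
        exact HasSubset.Subset.eventuallyLE Set.Ioc_subset_Ioi_self

lemma surv_pos {x : ℝ} (hx : 0 ≤ x) : 0 < stdNormalSurvival x :=
  lt_of_lt_of_le (by positivity) (surv_lower hx)

lemma ratio_tendsto (q r C D : ℝ) (hq : 0 < q) (hr : 0 ≤ r) :
    Tendsto (fun L : ℝ => (Real.sqrt (2*q*L - C) - Real.sqrt (2*r*L) + D) / Real.sqrt L)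
      atTop (nhds (Real.sqrt (2*q) - Real.sqrt (2*r))) := by
  have hinv : Tendsto (fun L : ℝ => L⁻¹) atTop (nhds 0) := tendsto_inv_atTop_zero
  have hsq : Tendsto (fun L : ℝ => Real.sqrt L⁻¹) atTop (nhds 0) := by
    simpa using hinv.sqrt
  have hC : Tendsto (fun L : ℝ => Real.sqrt (2*q - C * L⁻¹)) atTop
      (nhds (Real.sqrt (2*q))) := by
    have : Tendsto (fun L : ℝ => 2*q - C * L⁻¹) atTop (nhds (2*q - C * 0)) :=
      tendsto_const_nhds.sub (hinv.const_mul C)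
    simpa using this.sqrt
  have h1 : Tendsto (fun L : ℝ => Real.sqrt (2*q - C * L⁻¹) - Real.sqrt (2*r)
      + D * Real.sqrt L⁻¹) atTop
      (nhds (Real.sqrt (2*q) - Real.sqrt (2*r) + D * 0)) :=
    (hC.sub tendsto_const_nhds).add (hsq.const_mul D)
  rw [mul_zero, add_zero] at h1
  refine h1.congr' ?_
  have hev : ∀ᶠ L : ℝ in atTop, 0 < L ∧ 0 ≤ 2*q*L - C := by
    filter_upwards [eventually_gt_atTop 0,
      (tendsto_atTop_add_const_right atTop (-C)
        (tendsto_id.const_mul_atTop (by positivity : (0:ℝ) < 2*q))).eventually_ge_atTop 0]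
      with L h1 h2
    simp only [id_eq] at h2
    exact ⟨h1, by linarith⟩
  filter_upwards [hev] with L ⟨hL, hnum⟩
  have hLne : Real.sqrt L ≠ 0 := by positivity
  have e1 : Real.sqrt (2*q - C * L⁻¹) = Real.sqrt (2*q*L - C) / Real.sqrt L := by
    rw [← Real.sqrt_div hnum]
    congr 1
    field_simp
  have e2 : Real.sqrt (2*r*L) = Real.sqrt (2*r) * Real.sqrt L :=
    Real.sqrt_mul (by positivity) L
  rw [e1, e2, Real.sqrt_inv]
  field_simp

lemma bound_tendsto (q r C D c : ℝ) (hq : 0 < q) (hr : 0 ≤ r) :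
    Tendsto (fun L : ℝ =>
        (1/L) * (c - (Real.sqrt (2*q*L - C) - Real.sqrt (2*r*L) + D)^2/2))
      atTop (nhds (-(Real.sqrt (2*q) - Real.sqrt (2*r))^2/2)) := by
  have hinv : Tendsto (fun L : ℝ => L⁻¹) atTop (nhds 0) := tendsto_inv_atTop_zero
  have hR := ratio_tendsto q r C D hq hr
  have h2 : Tendsto (fun L : ℝ => c * L⁻¹ -
      ((Real.sqrt (2*q*L - C) - Real.sqrt (2*r*L) + D) / Real.sqrt L)^2/2) atTop
      (nhds (c * 0 - (Real.sqrt (2*q) - Real.sqrt (2*r))^2/2)) :=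
    (hinv.const_mul c).sub ((hR.pow 2).div_const 2)
  rw [mul_zero, zero_sub] at h2
  rw [neg_div]
  refine h2.congr' ?_
  filter_upwards [eventually_gt_atTop 0] with L hL
  rw [div_pow, Real.sq_sqrt hL.le]
  field_simp

/-- **Gaussian moderate-deviation behavior of non-null P-values:** for `Z` standard
normal, `q > r > 0` and `μ_n = √(2 r log n)`,
`(1/log n) log P(Φ̄(μ_n + Z) < n^{−q}) → −(√q − √r)²`. -/
theorem nonNull_pvalue_moderate_deviations
    (q r : ℝ) (hr : 0 < r) (hq : r < q) :
    Tendsto (fun n : ℕ => (1 / Real.log n) *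
        Real.log ((gaussianReal 0 1
          {z : ℝ | stdNormalSurvival (muCal r n + z) < (n : ℝ) ^ (-q)}).toReal))
      atTop (nhds (-(Real.sqrt q - Real.sqrt r) ^ 2)) := by
  have hq0 : 0 < q := hr.trans hq
  set L : ℕ → ℝ := fun n => Real.log n with hLdef
  set C : ℝ := 2 * Real.log (Real.sqrt (2*π)) with hCdef
  set P : ℕ → ℝ := fun n => (gaussianReal 0 1
      {z : ℝ | stdNormalSurvival (muCal r n + z) < (n : ℝ) ^ (-q)}).toReal with hPdef
  have hL : Tendsto L atTop atTop :=
    Real.tendsto_log_atTop.comp tendsto_natCast_atTop_atTop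
  have hc₀ : (0:ℝ) < (Real.sqrt (2*π))⁻¹ * Real.exp (-(0+1)^2/2) := by positivity
  set c₀ : ℝ := (Real.sqrt (2*π))⁻¹ * Real.exp (-(0+1)^2/2) with hc₀def
  -- target identification
  have htarget : -(Real.sqrt (2*q) - Real.sqrt (2*r))^2/2 = -(Real.sqrt q - Real.sqrt r)^2 := by
    rw [Real.sqrt_mul (by norm_num : (0:ℝ) ≤ 2) q, Real.sqrt_mul (by norm_num : (0:ℝ) ≤ 2) r]
    have h2 : Real.sqrt 2 ^ 2 = 2 := Real.sq_sqrt (by norm_num)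
    have : Real.sqrt 2 * Real.sqrt q - Real.sqrt 2 * Real.sqrt r
        = Real.sqrt 2 * (Real.sqrt q - Real.sqrt r) := by ring
    rw [this, mul_pow, h2]; ring
  -- limits of the two bounding sequences
  have hlow : Tendsto (fun n => (1 / L n) * ((-Real.log (Real.sqrt (2*π)))
      - (Real.sqrt (2*q*L n - 0) - Real.sqrt (2*r*L n) + 1)^2/2)) atTop
      (nhds (-(Real.sqrt q - Real.sqrt r) ^ 2)) := by
    rw [← htarget]
    exact (bound_tendsto q r 0 1 (-Real.log (Real.sqrt (2*π))) hq0 hr.le).comp hL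
  have hup : Tendsto (fun n => (1 / L n) * ((0:ℝ)
      - (Real.sqrt (2*q*L n - C) - Real.sqrt (2*r*L n) + (-1))^2/2)) atTop
      (nhds (-(Real.sqrt q - Real.sqrt r) ^ 2)) := by
    rw [← htarget]
    exact (bound_tendsto q r C (-1) 0 hq0 hr.le).comp hL
  -- eventual facts
  have hevL : ∀ᶠ n : ℕ in atTop, 0 < L n := hL.eventually_gt_atTop 0
  have hevexp : ∀ᶠ n : ℕ in atTop, Real.exp (L n * (-q)) < c₀ := by
    have h1 : Tendsto (fun n => L n * (-q)) atTop atBot :=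
      hL.atTop_mul_const_of_neg (by linarith : (-q) < 0)
    exact (Real.tendsto_exp_atBot.comp h1).eventually_lt_const hc₀
  have hevX : ∀ᶠ n : ℕ in atTop,
      0 ≤ Real.sqrt (2*q*L n - C) - Real.sqrt (2*r*L n) + (-1) := by
    have hA : (0:ℝ) < Real.sqrt (2*q) - Real.sqrt (2*r) := by
      have := Real.sqrt_lt_sqrt (by positivity) (by linarith : 2*r < 2*q)
      linarith
    have h1 := ((ratio_tendsto q r C (-1) hq0 hr.le).comp hL).eventually_const_lt hA
    filter_upwards [h1, hevL] with n h1 h2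
    simp only [Function.comp_apply] at h1
    have h3 : 0 < Real.sqrt (L n) := Real.sqrt_pos.mpr h2
    have h4 := mul_pos h1 h3
    rw [div_mul_cancel₀ _ h3.ne'] at h4
    exact h4.le
  -- the eventual sandwiching inequalities
  have hmono : ∀ {A B : Set ℝ}, A ⊆ B →
      (gaussianReal 0 1 A).toReal ≤ (gaussianReal 0 1 B).toReal := fun h =>
    (ENNReal.toReal_le_toReal (measure_ne_top _ _) (measure_ne_top _ _)).mpr (measure_mono h)
  have key : ∀ᶠ n : ℕ in atTop,
      ((1 / L n) * ((-Real.log (Real.sqrt (2*π)))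
        - (Real.sqrt (2*q*L n - 0) - Real.sqrt (2*r*L n) + 1)^2/2)
          ≤ (1 / L n) * Real.log (P n)) ∧
      ((1 / L n) * Real.log (P n) ≤ (1 / L n) * ((0:ℝ)
        - (Real.sqrt (2*q*L n - C) - Real.sqrt (2*r*L n) + (-1))^2/2)) := by
    filter_upwards [hevL, hevexp, hevX, eventually_ge_atTop 1] with n hLn hexp hX hn1
    have hnpos : (0:ℝ) < (n:ℝ) := by exact_mod_cast hn1
    have hrpow : (n:ℝ) ^ (-q) = Real.exp (L n * (-q)) := Real.rpow_def_of_pos hnpos (-q)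
    have hLq : 0 < 2*q*L n := by positivity
    have hμ : muCal r n = Real.sqrt (2*r*L n) := rfl
    have hBnonneg : 0 ≤ Real.sqrt (2*q*L n) - muCal r n := by
      rw [hμ]
      have := Real.sqrt_le_sqrt (by nlinarith : 2*r*L n ≤ 2*q*L n)
      linarith
    -- lower inclusion
    have hsub1 : Set.Ioi (Real.sqrt (2*q*L n) - muCal r n) ⊆
        {z : ℝ | stdNormalSurvival (muCal r n + z) < (n : ℝ) ^ (-q)} := by
      intro z hz
      have hz' : Real.sqrt (2*q*L n) < muCal r n + z := by
        have : Real.sqrt (2*q*L n) - muCal r n < z := hz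
        linarith
      have hw : 0 < muCal r n + z := lt_of_le_of_lt (Real.sqrt_nonneg _) hz'
      have hsq : 2*q*L n < (muCal r n + z)^2 := (Real.sqrt_lt' hw).mp hz'
      have h1 : stdNormalSurvival (muCal r n + z) ≤ Real.exp (-(muCal r n + z)^2/2) :=
        surv_upper hw.le
      have h2 : Real.exp (-(muCal r n + z)^2/2) < Real.exp (L n * (-q)) := by
        apply Real.exp_lt_exp.mpr
        nlinarith
      rw [Set.mem_setOf_eq, hrpow]
      exact lt_of_le_of_lt h1 h2
    have hPlow : stdNormalSurvival (Real.sqrt (2*q*L n) - muCal r n) ≤ P n := hmono hsub1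
    have hPpos : 0 < P n := lt_of_lt_of_le (surv_pos hBnonneg) hPlow
    -- upper inclusion
    have hsub2 : {z : ℝ | stdNormalSurvival (muCal r n + z) < (n : ℝ) ^ (-q)} ⊆
        Set.Ioi (Real.sqrt (2*q*L n - C) - Real.sqrt (2*r*L n) + (-1)) := by
      intro z hz
      rw [Set.mem_setOf_eq, hrpow] at hz
      have hz0 : 0 ≤ muCal r n + z := by
        by_contra hcon
        push_neg at hcon
        have h1 : stdNormalSurvival 0 ≤ stdNormalSurvival (muCal r n + z) :=
          surv_antitone hcon.le
        have h2 : c₀ ≤ stdNormalSurvival 0 := surv_lower le_rfl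
        linarith [lt_trans hz hexp]
      have h3 : (Real.sqrt (2*π))⁻¹ * Real.exp (-(muCal r n + z + 1)^2/2)
          < Real.exp (L n * (-q)) := lt_of_le_of_lt (surv_lower hz0) hz
      have h4 : -Real.log (Real.sqrt (2*π)) + (-(muCal r n + z + 1)^2/2) < L n * (-q) := by
        have := Real.log_lt_log (by positivity) h3
        rwa [Real.log_mul (by positivity) (Real.exp_ne_zero _), Real.log_exp,
          Real.log_inv, Real.log_exp] at this
      have h5 : 2*q*L n - C < (muCal r n + z + 1)^2 := by
        rw [hCdef]; nlinarith
      have hw : 0 < muCal r n + z + 1 := by linarith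
      have h6 : Real.sqrt (2*q*L n - C) < muCal r n + z + 1 :=
        (Real.sqrt_lt' hw).mpr h5
      have : Real.sqrt (2*q*L n - C) - Real.sqrt (2*r*L n) + (-1) < z := by
        rw [hμ] at h6; linarith
      exact this
    have hPup : P n ≤ stdNormalSurvival
        (Real.sqrt (2*q*L n - C) - Real.sqrt (2*r*L n) + (-1)) := hmono hsub2
    have hinvL : 0 ≤ 1 / L n := by positivity
    constructor
    · -- lower bound on log P n
      have h1 : (Real.sqrt (2*π))⁻¹ * Real.exp
          (-(Real.sqrt (2*q*L n) - muCal r n + 1)^2/2) ≤ P n :=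
        le_trans (surv_lower hBnonneg) hPlow
      have h2 : -Real.log (Real.sqrt (2*π))
          + (-(Real.sqrt (2*q*L n) - muCal r n + 1)^2/2) ≤ Real.log (P n) := by
        have := Real.log_le_log (by positivity) h1
        rwa [Real.log_mul (by positivity) (Real.exp_ne_zero _), Real.log_exp,
          Real.log_inv] at this
      have heq : (-Real.log (Real.sqrt (2*π)))
          - (Real.sqrt (2*q*L n - 0) - Real.sqrt (2*r*L n) + 1)^2/2
          = -Real.log (Real.sqrt (2*π))
          + (-(Real.sqrt (2*q*L n) - muCal r n + 1)^2/2) := by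
        rw [hμ, sub_zero]; ring
      rw [heq]
      exact mul_le_mul_of_nonneg_left h2 hinvL
    · -- upper bound on log P n
      have h1 : P n ≤ Real.exp
          (-(Real.sqrt (2*q*L n - C) - Real.sqrt (2*r*L n) + (-1))^2/2) :=
        le_trans hPup (surv_upper hX)
      have h2 : Real.log (P n) ≤
          -(Real.sqrt (2*q*L n - C) - Real.sqrt (2*r*L n) + (-1))^2/2 := by
        have := Real.log_le_log hPpos h1
        rwa [Real.log_exp] at this
      have heq : (0:ℝ) - (Real.sqrt (2*q*L n - C) - Real.sqrt (2*r*L n) + (-1))^2/2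
          = -(Real.sqrt (2*q*L n - C) - Real.sqrt (2*r*L n) + (-1))^2/2 := by ring
      rw [heq]
      exact mul_le_mul_of_nonneg_left h2 hinvL
  exact tendsto_of_tendsto_of_tendsto_of_le_of_le' hlow hup
    (key.mono fun n h => h.1) (key.mono fun n h => h.2)
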